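/- arXiv:2008.00301 — 2 statements merged into one kernel-verified Lean document; each statement's English description precedes it below -/
import Mathlib

section
/- (Theorem 1, finite case.) Let x̂ ∈ ℝⁿ and let X, G ⊆ ℝⁿ be finite sets. Then C(x̂, G) = C(x̂, X) if and only if the pointed conic hulls of the translated sets coincide exactly: cone({x − x̂ : x ∈ G}) = cone({x − x̂ : x ∈ X}). -/
/-- The inverse-feasible region `C(x̂, S)`: the set of cost vectors `c` for which `x̂`
minimizes `⟪c, ·⟫` over `S`. -/
def invFeas {n : ℕ} (xh : EuclideanSpace ℝ (Fin n)) (S : Set (EuclideanSpace ℝ (Fin n))) :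
    Set (EuclideanSpace ℝ (Fin n)) :=
  {c | ∀ x ∈ S, (inner ℝ c xh : ℝ) ≤ inner ℝ c x}


/-- The pointed conic hull of `S`: all finite nonnegative linear combinations of
elements of `S`, i.e. the `ℝ≥0`-submodule spanned by `S`. -/
def cone {n : ℕ} (S : Set (EuclideanSpace ℝ (Fin n))) : Set (EuclideanSpace ℝ (Fin n)) :=
  (Submodule.span {c : ℝ // 0 ≤ c} S : Submodule {c : ℝ // 0 ≤ c} (EuclideanSpace ℝ (Fin n)))

/-!
`C(x̂, S)` is the inner dual cone of `S - x̂`, and a set and its conic hull have the same inner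
dual. Conversely a closed convex cone is its own double dual, and finitely generated cones are
closed: by the conic Carathéodory theorem such a cone is a finite union of cones over linearly
independent sets, each the image of a closed orthant under an injective linear map.
-/

open PointedCone

section Algebraic

variable {E : Type*} [AddCommGroup E] [Module ℝ E]

lemma mem_hull_finset_iff {s : Finset E} {x : E} :
    x ∈ hull ℝ (s : Set E) ↔ ∃ f : E → ℝ, (∀ e ∈ s, 0 ≤ f e) ∧ ∑ e ∈ s, f e • e = x := by
  constructor
  · intro hx
    obtain ⟨f, -, hf⟩ := Submodule.mem_span_finset.1 hx
    exact ⟨fun e => f e, fun e _ => (f e).2, hf⟩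
  · rintro ⟨f, hf, rfl⟩
    exact Submodule.sum_mem _ fun e he =>
      PointedCone.smul_mem _ (hf e he) (Submodule.subset_span he)

lemma exists_mem_hull_erase_of_sum_smul_eq_zero [DecidableEq E] {s : Finset E} {x : E}
    (hx : x ∈ hull ℝ (s : Set E)) {g : E → ℝ} (hg : ∑ e ∈ s, g e • e = 0)
    (hpos : ∃ e ∈ s, 0 < g e) :
    ∃ b ∈ s, x ∈ hull ℝ (s.erase b : Set E) := by
  obtain ⟨f, hf, rfl⟩ := mem_hull_finset_iff.1 hx
  have hP : (s.filter (0 < g ·)).Nonempty := by simpa [Finset.Nonempty] using hpos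
  -- ratio test: `b` minimises `f / g` over the positive part of the relation `g`
  obtain ⟨b, hbP, hbmin⟩ := (s.filter (0 < g ·)).exists_min_image (fun e => f e / g e) hP
  obtain ⟨hbs, hgb⟩ := Finset.mem_filter.1 hbP
  set τ := f b / g b
  have hτ : 0 ≤ τ := div_nonneg (hf b hbs) hgb.le
  refine ⟨b, hbs, mem_hull_finset_iff.2 ⟨fun e => f e - τ * g e, fun e he => ?_, ?_⟩⟩
  · have hes := Finset.mem_of_mem_erase he
    rcases le_or_gt (g e) 0 with hge | hge
    · linarith [hf e hes, mul_nonpos_of_nonneg_of_nonpos hτ hge]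
    · have := (le_div_iff₀ hge).1 (hbmin e (Finset.mem_filter.2 ⟨hes, hge⟩))
      linarith
  · have hb : (f b - τ * g b) • b = 0 := by rw [div_mul_cancel₀ _ hgb.ne', sub_self, zero_smul]
    rw [Finset.sum_erase s (f := fun e => (f e - τ * g e) • e) hb]
    simp only [sub_smul, Finset.sum_sub_distrib, mul_smul, ← Finset.smul_sum, hg, smul_zero,
      sub_zero]

lemma exists_mem_hull_erase_of_not_linearIndepOn [DecidableEq E] {s : Finset E} {x : E}
    (hs : ¬LinearIndepOn ℝ id (s : Set E)) (hx : x ∈ hull ℝ (s : Set E)) :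
    ∃ b ∈ s, x ∈ hull ℝ (s.erase b : Set E) := by
  obtain ⟨g, hg, i, hi, hgi⟩ := not_linearIndepOn_finset_iff.1 hs
  rcases hgi.lt_or_gt with hneg | hpos
  · refine exists_mem_hull_erase_of_sum_smul_eq_zero hx (g := -g) ?_ ⟨i, hi, by simpa⟩
    simpa [neg_smul, Finset.sum_neg_distrib] using hg
  · exact exists_mem_hull_erase_of_sum_smul_eq_zero hx hg ⟨i, hi, hpos⟩

theorem exists_linearIndepOn_subset_mem_hull (s : Finset E) {x : E}
    (hx : x ∈ hull ℝ (s : Set E)) :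
    ∃ t ⊆ s, LinearIndepOn ℝ id (t : Set E) ∧ x ∈ hull ℝ (t : Set E) := by
  classical
  induction s using Finset.strongInduction with
  | H s ih =>
    by_cases hs : LinearIndepOn ℝ id (s : Set E)
    · exact ⟨s, subset_rfl, hs, hx⟩
    obtain ⟨b, hb, hxb⟩ := exists_mem_hull_erase_of_not_linearIndepOn hs hx
    obtain ⟨t, hts, ht, hxt⟩ := ih _ (Finset.erase_ssubset hb) hxb
    exact ⟨t, hts.trans (Finset.erase_subset b s), ht, hxt⟩

lemma coe_hull_range_eq_image_nonneg {ι : Type*} [Fintype ι] (v : ι → E) :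
    (hull ℝ (Set.range v) : Set E) = Fintype.linearCombination ℝ v '' Set.Ici 0 := by
  ext x
  simp only [SetLike.mem_coe, Submodule.mem_span_range_iff_exists_fun, Set.mem_image,
    Set.mem_Ici, Fintype.linearCombination_apply]
  constructor
  · rintro ⟨c, rfl⟩
    exact ⟨fun i => c i, fun i => (c i).2, rfl⟩
  · rintro ⟨c, hc, rfl⟩
    exact ⟨fun i => ⟨c i, hc i⟩, rfl⟩

end Algebraic

section Topological

variable {E : Type*} [AddCommGroup E] [Module ℝ E] [TopologicalSpace E] [IsTopologicalAddGroup E]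
  [ContinuousSMul ℝ E] [T2Space E]

lemma isClosed_hull_range_of_linearIndependent {ι : Type*} [Finite ι] {v : ι → E}
    (hv : LinearIndependent ℝ v) : IsClosed (hull ℝ (Set.range v) : Set E) := by
  have := Fintype.ofFinite ι
  rw [coe_hull_range_eq_image_nonneg]
  exact (LinearMap.isClosedEmbedding_of_injective (LinearMap.ker_eq_bot.2
    hv.fintypeLinearCombination_injective)).isClosedMap _ isClosed_Ici

theorem isClosed_hull_of_finite {s : Set E} (hs : s.Finite) : IsClosed (hull ℝ s : Set E) := by
  classical
  lift s to Finset E using hs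
  have hunion : (hull ℝ (s : Set E) : Set E) =
      ⋃ t ∈ s.powerset.filter (fun t : Finset E => LinearIndepOn ℝ id (t : Set E)),
        (hull ℝ (t : Set E) : Set E) := by
    ext x
    simp only [Set.mem_iUnion₂, Finset.mem_filter, Finset.mem_powerset, SetLike.mem_coe,
      exists_prop]
    constructor
    · intro hx
      obtain ⟨t, hts, ht, hxt⟩ := exists_linearIndepOn_subset_mem_hull s hx
      exact ⟨t, ⟨hts, ht⟩, hxt⟩
    · rintro ⟨t, ⟨hts, -⟩, hxt⟩
      exact Submodule.span_mono (Finset.coe_subset.2 hts) hxt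
  rw [hunion]
  refine isClosed_biUnion_finset fun t ht => ?_
  have h := isClosed_hull_range_of_linearIndependent (Finset.mem_filter.1 ht).2
  rwa [show Set.range (fun x : (t : Set E) => id (x : E)) = t from Subtype.range_coe] at h

end Topological

section InnerDual

open ProperCone

variable {E : Type*} [NormedAddCommGroup E] [InnerProductSpace ℝ E] [CompleteSpace E]

lemma innerDual_hull (s : Set E) : innerDual (hull ℝ s : Set E) = innerDual s :=
  toPointedCone_injective (dual_hull s)

lemma coe_innerDual_innerDual_of_finite {s : Set E} (hs : s.Finite) :
    (innerDual (innerDual s : Set E) : Set E) = hull ℝ s := by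
  rw [← innerDual_hull s]
  exact congrArg (fun C : ProperCone ℝ E => (C : Set E))
    (innerDual_innerDual ⟨hull ℝ s, isClosed_hull_of_finite hs⟩)

end InnerDual

lemma invFeas_eq_innerDual {n : ℕ} (xh : EuclideanSpace ℝ (Fin n))
    (S : Set (EuclideanSpace ℝ (Fin n))) :
    invFeas xh S = ProperCone.innerDual ((· - xh) '' S) := by
  ext c
  simp only [invFeas, Set.mem_ofPred_eq, SetLike.mem_coe, ProperCone.mem_innerDual,
    Set.forall_mem_image, real_inner_comm c, inner_sub_right, sub_nonneg]

/-- Theorem 1, finite case: for finite `X` and `G`, `G` is a generator set for `X`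
iff the pointed conic hulls of the translated sets coincide exactly. -/
theorem generatorSet_iff_cone_eq_of_finite {n : ℕ} (xh : EuclideanSpace ℝ (Fin n))
    (X G : Set (EuclideanSpace ℝ (Fin n))) (hX : X.Finite) (hG : G.Finite) :
    invFeas xh G = invFeas xh X ↔
      cone ((fun x => x - xh) '' G) = cone ((fun x => x - xh) '' X) := by
  unfold cone
  rw [invFeas_eq_innerDual, invFeas_eq_innerDual]
  constructor
  · intro h
    rw [← coe_innerDual_innerDual_of_finite (hG.image _),
      ← coe_innerDual_innerDual_of_finite (hX.image _), h]
  · intro h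
    rw [← innerDual_hull, h, innerDual_hull]
end

section
/- (Theorem 2, sufficiency.) Let X ⊆ ℝⁿ, x̂ ∈ X, and G ⊆ X. Suppose there exists ε > 0 such that Metric.closedBall x̂ ε ∩ convexHull ℝ X ⊆ convexHull ℝ (G ∪ {x̂}). Then G is a forward-feasible generator set: C(x̂, G) = C(x̂, X). -/
/-!
If `x̂` minimizes `⟪c, ·⟫` over `G`, it also does over the convex hull of `G ∪ {x̂}`, since
half-spaces are convex. The hypothesis then makes `x̂` a local minimum of `⟪c, ·⟫` on the convex
set `convexHull ℝ X`, and a local minimum of a convex (here linear) function on a convex set is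
a global one.
-/

open Set Filter

theorem LinearMap.isMinOn_convexHull_union_singleton {𝕜 E β : Type*} [Semiring 𝕜]
    [PartialOrder 𝕜] [AddCommMonoid E] [Module 𝕜 E] [AddCommMonoid β] [PartialOrder β]
    [IsOrderedAddMonoid β] [Module 𝕜 β] [PosSMulMono 𝕜 β] (f : E →ₗ[𝕜] β) {s : Set E} {a : E}
    (h : IsMinOn f s a) : IsMinOn f (convexHull 𝕜 (s ∪ {a})) a :=
  convexHull_min (union_subset h (singleton_subset_iff.2 le_rfl))
    (convex_halfSpace_ge f.isLinear (f a))

section invFeas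

variable {n : ℕ} {xh : EuclideanSpace ℝ (Fin n)} {S T : Set (EuclideanSpace ℝ (Fin n))}

theorem mem_invFeas_iff_isMinOn {c : EuclideanSpace ℝ (Fin n)} :
    c ∈ invFeas xh S ↔ IsMinOn (innerₛₗ ℝ c) S xh :=
  isMinOn_iff.symm

theorem invFeas_anti (hST : S ⊆ T) : invFeas xh T ⊆ invFeas xh S :=
  fun _ hc x hx => hc x (hST hx)

end invFeas

/-- Theorem 2, sufficiency: if the convex hull of `G ∪ {x̂}` contains a small ball
around `x̂` intersected with the convex hull of `X`, then `G` is a forward-feasible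
generator set. -/
theorem forwardFeasible_generatorSet_of_ball_subset {n : ℕ}
    (X : Set (EuclideanSpace ℝ (Fin n))) (xh : EuclideanSpace ℝ (Fin n)) (hx : xh ∈ X)
    (G : Set (EuclideanSpace ℝ (Fin n))) (hGX : G ⊆ X)
    (h : ∃ ε : ℝ, 0 < ε ∧
      Metric.closedBall xh ε ∩ convexHull ℝ X ⊆ convexHull ℝ (G ∪ {xh})) :
    invFeas xh G = invFeas xh X := by
  obtain ⟨ε, hε, hball⟩ := h
  refine Subset.antisymm (fun c hc => ?_) (invFeas_anti hGX)
  rw [mem_invFeas_iff_isMinOn] at hc ⊢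
  set f := innerₛₗ ℝ c
  have hlocal : IsLocalMinOn f (convexHull ℝ X) xh :=
    mem_of_superset (inter_mem_nhdsWithin _ (Metric.closedBall_mem_nhds xh hε))
      ((inter_comm _ _).subset.trans (hball.trans (f.isMinOn_convexHull_union_singleton hc)))
  have hglobal : IsMinOn f (convexHull ℝ X) xh :=
    .of_isLocalMinOn_of_convexOn (subset_convexHull ℝ X hx) hlocal
      (f.convexOn (convex_convexHull ℝ X))
  exact hglobal.on_subset (subset_convexHull ℝ X)
end
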